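/- arXiv:1605.00488 — 5 statements merged into one kernel-verified Lean document; each statement's English description precedes it below -/
import Mathlib

section
/- There is no complex polynomial g and constant c ∈ ℂ such that λ^n + a₁(λ)e^{−λ} + ⋯ + a_k(λ)e^{−kλ} = g(λ)e^{cλ} for all λ ∈ ℂ, whenever n, k ≥ 1 and a_k is a nonzero polynomial. -/
open Filter Polynomial Topology

/-!
Along the positive real axis every term `a_j(t) e^{-jt}` decays, and so does `g(t) e^{ct}` when
`Re c < 0`; the identity would then force `t ^ n → 0`. Hence `Re c ≥ 0`. Along the negative real
axis, after multiplying by `e^{-kt}`, every term except `a_k(-t)` decays (the right-hand side because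
`Re c + k > 0`), so the polynomial `a_k` tends to `0` at infinity and must vanish.
-/

theorem Polynomial.eq_zero_of_tendsto_eval_nhds_zero {α R : Type*} [NormedRing R]
    [IsAbsoluteValue (norm : R → ℝ)] {l : Filter α} [l.NeBot] {z : α → R}
    (hz : Tendsto (fun x => ‖z x‖) l atTop) {p : R[X]}
    (hp : Tendsto (fun x => p.eval (z x)) l (𝓝 0)) : p = 0 := by
  by_cases hdeg : 0 < p.degree
  · exact absurd (by simpa using hp.norm)
      (not_tendsto_nhds_of_tendsto_atTop (p.tendsto_norm_atTop hdeg hz) 0)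
  · rw [eq_C_of_degree_le_zero (not_lt.mp hdeg)] at hp ⊢
    simp only [eval_C] at hp
    simp [tendsto_nhds_unique tendsto_const_nhds hp]

theorem Real.tendsto_pow_mul_exp_mul_atTop_nhds_zero (m : ℕ) {b : ℝ} (hb : b < 0) :
    Tendsto (fun t : ℝ => t ^ m * Real.exp (b * t)) atTop (𝓝 0) := by
  refine ((isLittleO_pow_exp_pos_mul_atTop m (neg_pos.mpr hb)).tendsto_div_nhds_zero).congr
    fun t => ?_
  rw [div_eq_mul_inv, ← Real.exp_neg, neg_mul, neg_neg]

theorem Polynomial.tendsto_eval_mul_cexp_atTop_nhds_zero (p : ℂ[X]) (u : ℂ) {c : ℂ}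
    (hc : c.re < 0) :
    Tendsto (fun t : ℝ => p.eval (u * t) * Complex.exp (c * t)) atTop (𝓝 0) := by
  induction p using Polynomial.induction_on' with
  | add p q hp hq => simpa [add_mul] using hp.add hq
  | monomial m b =>
    rw [tendsto_zero_iff_norm_tendsto_zero]
    have hmon := (Real.tendsto_pow_mul_exp_mul_atTop_nhds_zero m hc).const_mul (‖b‖ * ‖u‖ ^ m)
    rw [mul_zero] at hmon
    refine hmon.congr' ?_
    filter_upwards [eventually_ge_atTop 0] with t ht
    simp [Complex.norm_exp, norm_pow, abs_of_nonneg ht, mul_pow]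
    ring

theorem re_nonneg_of_pow_add_sum_eq_mul_cexp {n k : ℕ} {a : Fin k → ℂ[X]} {g : ℂ[X]} {c : ℂ}
    (h : ∀ lam : ℂ, lam ^ n + ∑ j : Fin k,
      (a j).eval lam * Complex.exp (-(((j : ℕ) : ℂ) + 1) * lam)
        = g.eval lam * Complex.exp (c * lam)) :
    0 ≤ c.re := by
  by_contra! hc
  have hsum := tendsto_finsetSum Finset.univ fun (j : Fin k) _ =>
    (a j).tendsto_eval_mul_cexp_atTop_nhds_zero 1 (c := -(((j : ℕ) : ℂ) + 1))
      (by simp only [Complex.neg_re, Complex.add_re, Complex.natCast_re, Complex.one_re]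
          exact neg_neg_of_pos (by positivity))
  have hpow : Tendsto (fun t : ℝ => ((X : ℂ[X]) ^ n).eval (t : ℂ)) atTop (𝓝 0) := by
    refine ((g.tendsto_eval_mul_cexp_atTop_nhds_zero 1 hc).sub hsum).congr (fun t => ?_)
      |>.trans (by simp)
    simp only [one_mul, eval_pow, eval_X, ← h]
    ring
  exact pow_ne_zero n X_ne_zero <| eq_zero_of_tendsto_eval_nhds_zero
    (by simpa using tendsto_abs_atTop_atTop) hpow

theorem last_eq_zero_of_pow_add_sum_eq_mul_cexp {n m : ℕ} {a : Fin (m + 1) → ℂ[X]} {g : ℂ[X]}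
    {c : ℂ} (hc : 0 ≤ c.re)
    (h : ∀ lam : ℂ, lam ^ n + ∑ j : Fin (m + 1),
      (a j).eval lam * Complex.exp (-(((j : ℕ) : ℂ) + 1) * lam)
        = g.eval lam * Complex.exp (c * lam)) :
    a (Fin.last m) = 0 := by
  have hm : (0 : ℝ) < m + 1 := by positivity
  have hg := g.tendsto_eval_mul_cexp_atTop_nhds_zero (-1) (c := -c - (m + 1))
    (by simp only [Complex.sub_re, Complex.neg_re, Complex.add_re, Complex.natCast_re,
      Complex.one_re]; linarith)
  have hpow := ((X : ℂ[X]) ^ n).tendsto_eval_mul_cexp_atTop_nhds_zero (-1) (c := -(m + 1))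
    (by simp only [Complex.neg_re, Complex.add_re, Complex.natCast_re, Complex.one_re]; linarith)
  have hsum := tendsto_finsetSum Finset.univ fun (j : Fin m) _ =>
    (a j.castSucc).tendsto_eval_mul_cexp_atTop_nhds_zero (-1) (c := (j : ℂ) - m)
      (by simp only [Complex.sub_re, Complex.natCast_re, sub_neg]; exact_mod_cast j.isLt)
  refine eq_zero_of_tendsto_eval_nhds_zero (z := fun t : ℝ => -(t : ℂ))
    (by simpa using tendsto_abs_atTop_atTop)
    ((((hg.sub hpow).sub hsum).congr fun t => ?_).trans (by simp))
  set E := Complex.exp (-(m + 1) * t)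
  have hexp_g : Complex.exp ((-c - (m + 1)) * t) = Complex.exp (c * -t) * E := by
    rw [← Complex.exp_add]; ring_nf
  have hexp_sum (j : ℕ) :
      Complex.exp (((j : ℂ) - m) * t) = Complex.exp (-((j : ℂ) + 1) * -t) * E := by
    rw [← Complex.exp_add]; ring_nf
  have hexp_last : Complex.exp (-((m : ℂ) + 1) * -t) * E = 1 := by
    rw [← Complex.exp_add, ← Complex.exp_zero]; ring_nf
  have ht := h (-t)
  rw [Fin.sum_univ_castSucc] at ht
  simp only [neg_one_mul, eval_pow, eval_X, Fin.val_castSucc, Fin.val_last, hexp_g, hexp_sum,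
    ← mul_assoc, ← Finset.sum_mul] at ht ⊢
  linear_combination (-E) * ht + (a (Fin.last m)).eval (-t) * hexp_last

theorem stmt_4 (n k : ℕ) (hk1 : 1 ≤ k)
    (a : Fin k → Polynomial ℂ) (hak : a ⟨k - 1, by omega⟩ ≠ 0) :
    ¬ ∃ (g : Polynomial ℂ) (c : ℂ), ∀ lam : ℂ,
      lam ^ n + ∑ j : Fin k, (a j).eval lam * Complex.exp (-(((j : ℕ) : ℂ) + 1) * lam)
        = g.eval lam * Complex.exp (c * lam) := by
  rintro ⟨g, c, h⟩
  obtain ⟨m, rfl⟩ : ∃ m, k = m + 1 := ⟨k - 1, by omega⟩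
  exact hak (last_eq_zero_of_pow_add_sum_eq_mul_cexp (re_nonneg_of_pow_add_sum_eq_mul_cexp h) h)
end

section
/- An entire function of order at most 1 with at most finitely many zeros has the form f(λ) = g(λ)e^{cλ} for some complex polynomial g and some c ∈ ℂ. -/
/-!
Dividing out the finitely many zeros writes `f = P · exp G` with `P` a polynomial and `G` entire.
Since `|P|` is bounded below near infinity, the order hypothesis gives
`Re G(z) ≤ C (1 + |z|)^{3/2}`; the Borel–Carathéodory theorem turns this into
`|G(z)| ≤ C' (1 + |z|)^{3/2}`, and Cauchy's estimate for `G''` on large circles then forces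
`G'' = 0`, so `G` is affine.
-/

open Complex Metric Filter Topology Polynomial Bornology

section dslope

variable {E : Type*} [NormedAddCommGroup E] [NormedSpace ℂ E] [CompleteSpace E]

theorem Differentiable.dslope {f : ℂ → E} (hf : Differentiable ℂ f) (a : ℂ) :
    Differentiable ℂ (_root_.dslope f a) :=
  differentiableOn_univ.1 <| (differentiableOn_dslope univ_mem).2 hf.differentiableOn

theorem Differentiable.iterate_dslope {f : ℂ → E} (hf : Differentiable ℂ f) (a : ℂ) (n : ℕ) :
    Differentiable ℂ ((Function.swap _root_.dslope a)^[n] f) := by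
  induction n with
  | zero => exact hf
  | succ n ih => rw [Function.iterate_succ_apply']; exact ih.dslope a

end dslope

theorem Differentiable.exists_pow_mul_of_not_eventually_eq_zero {f : ℂ → ℂ}
    (hf : Differentiable ℂ f) {z₀ : ℂ} (h : ¬∀ᶠ z in 𝓝 z₀, f z = 0) :
    ∃ (m : ℕ) (g : ℂ → ℂ), Differentiable ℂ g ∧ g z₀ ≠ 0 ∧
      ∀ z, f z = (z - z₀) ^ m * g z := by
  obtain ⟨p, hp⟩ := hf.analyticAt z₀
  exact ⟨p.order, _, hf.iterate_dslope z₀ p.order,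
    hp.iterate_dslope_fslope_ne_zero (mt hp.locally_zero_iff.mpr h),
    hp.eq_pow_order_mul_iterate_dslope⟩

theorem Differentiable.exists_polynomial_mul_of_zeros_subset {f : ℂ → ℂ}
    (hf : Differentiable ℂ f) (S : Finset ℂ) (hS : {z | f z = 0} ⊆ S) :
    ∃ (P : ℂ[X]) (h : ℂ → ℂ), Differentiable ℂ h ∧ (∀ z, h z ≠ 0) ∧
      ∀ z, f z = P.eval z * h z := by
  induction S using Finset.induction_on generalizing f with
  | empty => exact ⟨1, f, hf, fun z hz => by simpa using hS hz, by simp⟩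
  | insert a S _ ih =>
    by_cases hfa : f a = 0
    · have hnz : ¬∀ᶠ z in 𝓝 a, f z = 0 := fun h =>
        infinite_of_mem_nhds a h ((Finset.finite_toSet _).subset hS)
      obtain ⟨m, g, hg, hga, hfg⟩ := hf.exists_pow_mul_of_not_eventually_eq_zero hnz
      have hgS : {z | g z = 0} ⊆ S := fun z (hz : g z = 0) => by
        have hza : z ≠ a := by rintro rfl; exact hga hz
        simpa [hza] using hS (show f z = 0 by simp [hfg, hz])
      obtain ⟨Q, h, hh, hh0, hgQ⟩ := ih hg hgS
      exact ⟨(X - C a) ^ m * Q, h, hh, hh0, fun z => by simp [hfg, hgQ, mul_assoc]⟩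
    · refine ih hf fun z (hz : f z = 0) => ?_
      have hza : z ≠ a := by rintro rfl; exact hfa hz
      simpa [hza] using hS hz

theorem Differentiable.exists_exp_eq {f : ℂ → ℂ} (hf : Differentiable ℂ f)
    (hf0 : ∀ z, f z ≠ 0) : ∃ G : ℂ → ℂ, Differentiable ℂ G ∧ ∀ z, f z = cexp (G z) := by
  obtain ⟨g, hg⟩ := (hf.deriv.div hf hf0).isExactOn_univ
  have hfg : ∀ z, HasDerivAt (fun w => f w * cexp (-g w)) 0 z := fun z => by
    refine ((hf z).hasDerivAt.mul (hg z trivial).neg.cexp).congr_deriv ?_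
    simp only [Pi.div_apply]
    field_simp [hf0 z]
    ring
  have hconst (z : ℂ) : f z * cexp (-g z) = f 0 * cexp (-g 0) :=
    is_const_of_deriv_eq_zero (fun w => (hfg w).differentiableAt) (fun w => (hfg w).deriv) z 0
  have hc : f 0 * cexp (-g 0) ≠ 0 := mul_ne_zero (hf0 0) (exp_ne_zero _)
  refine ⟨fun z => Complex.log (f 0 * cexp (-g 0)) + g z,
    (differentiable_const _).add fun z => (hg z trivial).differentiableAt, fun z => ?_⟩
  rw [exp_add, exp_log hc, ← hconst z, mul_assoc, ← exp_add, neg_add_cancel, exp_zero,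
    mul_one]

theorem Polynomial.exists_pos_eventually_le_norm_eval {𝕜 : Type*} [NormedField 𝕜]
    {P : 𝕜[X]} (hP : P ≠ 0) : ∃ c > 0, ∀ᶠ z in cobounded 𝕜, c ≤ ‖P.eval z‖ := by
  by_cases hdeg : 0 < P.degree
  · exact ⟨1, one_pos,
      (P.tendsto_norm_atTop hdeg tendsto_norm_cobounded_atTop).eventually_ge_atTop 1⟩
  · rw [eq_C_of_degree_le_zero (not_lt.1 hdeg)] at hP ⊢
    exact ⟨‖P.coeff 0‖, by simpa using hP, by simp⟩

theorem exists_le_mul_one_add_norm_rpow {E : Type*} [NormedAddCommGroup E] [ProperSpace E]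
    {u : E → ℝ} (hu : Continuous u) {q K : ℝ} (hq : 0 ≤ q)
    (h : ∀ᶠ z in cobounded E, u z ≤ ‖z‖ ^ q + K) : ∃ C, ∀ z, u z ≤ C * (1 + ‖z‖) ^ q := by
  obtain ⟨R, -, hR⟩ := hasBasis_cobounded_norm.eventually_iff.1 h
  obtain ⟨M, hM⟩ :=
    (isCompact_closedBall (0 : E) R).exists_bound_of_continuousOn hu.continuousOn
  refine ⟨1 + |K| + |M|, fun z => ?_⟩
  have h1 : 1 ≤ (1 + ‖z‖) ^ q := Real.one_le_rpow (by simp) hq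
  have h2 : ‖z‖ ^ q ≤ (1 + ‖z‖) ^ q := by gcongr; simp
  rcases le_total ‖z‖ R with hz | hz
  · have := (le_abs_self _).trans (hM z (by simpa using hz))
    nlinarith [abs_nonneg K, abs_nonneg M, le_abs_self M]
  · nlinarith [hR hz, abs_nonneg K, abs_nonneg M, le_abs_self K]

theorem exists_re_le_mul_one_add_norm_rpow {G : ℂ → ℂ} (hG : Continuous G) {P : ℂ[X]}
    (hP : P ≠ 0) {q : ℝ} (hq : 0 ≤ q)
    (hgrowth : ∀ᶠ z in cobounded ℂ, ‖P.eval z * cexp (G z)‖ ≤ Real.exp (‖z‖ ^ q)) :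
    ∃ C, ∀ z, (G z).re ≤ C * (1 + ‖z‖) ^ q := by
  obtain ⟨c, hc, hPc⟩ := P.exists_pos_eventually_le_norm_eval hP
  refine exists_le_mul_one_add_norm_rpow (continuous_re.comp hG) hq (K := -Real.log c) ?_
  filter_upwards [hPc, hgrowth] with z hcz hz
  rw [norm_mul, norm_exp] at hz
  have : Real.exp ((G z).re + Real.log c) ≤ Real.exp (‖z‖ ^ q) := by
    rw [Real.exp_add, Real.exp_log hc, mul_comm]
    exact (mul_le_mul_of_nonneg_right hcz (Real.exp_pos _).le).trans hz
  simp only [Function.comp_apply]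
  linarith [Real.exp_le_exp.1 this]

theorem Differentiable.exists_norm_le_of_re_le {G : ℂ → ℂ} (hG : Differentiable ℂ G)
    {C q : ℝ} (hq : 0 ≤ q) (hre : ∀ z, (G z).re ≤ C * (1 + ‖z‖) ^ q) :
    ∃ C', ∀ z, ‖G z‖ ≤ C' * (1 + ‖z‖) ^ q := by
  refine ⟨2 * ((|C| + 1) * 3 ^ q) + 3 * ‖G 0‖, fun z => ?_⟩
  set r := 1 + ‖z‖
  have hr : 1 ≤ r := by simp [r]
  set M := (|C| + 1) * 3 ^ q * r ^ q
  have hmaps : Set.MapsTo G (ball 0 (2 * r)) {w | w.re ≤ M} := fun w hw => by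
    have hw' : 1 + ‖w‖ ≤ 3 * r := by rw [mem_ball_zero_iff] at hw; linarith
    calc (G w).re ≤ C * (1 + ‖w‖) ^ q := hre w
      _ ≤ (|C| + 1) * (1 + ‖w‖) ^ q :=
        mul_le_mul_of_nonneg_right (by linarith [le_abs_self C]) (by positivity)
      _ ≤ (|C| + 1) * (3 * r) ^ q := by gcongr
      _ = M := by rw [Real.mul_rpow (by norm_num) (by positivity), ← mul_assoc]
  have hz : z ∈ ball (0 : ℂ) (2 * r) := by rw [mem_ball_zero_iff]; linarith
  have hBC := borelCaratheodory (by positivity) hG.differentiableOn hmaps (by positivity) hz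
  have hden : 0 < 2 * r - ‖z‖ := by linarith
  have h1 : 2 * M * ‖z‖ / (2 * r - ‖z‖) ≤ 2 * M := by
    rw [div_le_iff₀ hden]; nlinarith [show 0 < M by positivity]
  have h2 : ‖G 0‖ * (2 * r + ‖z‖) / (2 * r - ‖z‖) ≤ 3 * ‖G 0‖ := by
    rw [div_le_iff₀ hden]; nlinarith [norm_nonneg (G 0), norm_nonneg z]
  have h3 : ‖G 0‖ ≤ ‖G 0‖ * r ^ q :=
    le_mul_of_one_le_right (norm_nonneg _) (Real.one_le_rpow hr hq)
  linarith

theorem Differentiable.iteratedDeriv_two_eq_zero_of_norm_le {G : ℂ → ℂ}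
    (hG : Differentiable ℂ G) {C q : ℝ} (hq₀ : 0 ≤ q) (hq : q < 2)
    (hbound : ∀ z, ‖G z‖ ≤ C * (1 + ‖z‖) ^ q) (c : ℂ) : iteratedDeriv 2 G c = 0 := by
  have hcauchy (R : ℝ) (hR : 1 + ‖c‖ ≤ R) :
      ‖iteratedDeriv 2 G c‖ ≤ 2 * (|C| * 2 ^ q) * R ^ (-(2 - q)) := by
    have hR0 : 0 < R := by linarith [norm_nonneg c]
    have hsphere : ∀ w ∈ sphere c R, ‖G w‖ ≤ |C| * 2 ^ q * R ^ q := fun w hw => by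
      have hw : 1 + ‖w‖ ≤ 2 * R := by
        rw [mem_sphere_iff_norm] at hw
        linarith [norm_le_norm_add_norm_sub' w c]
      calc ‖G w‖ ≤ C * (1 + ‖w‖) ^ q := hbound w
        _ ≤ |C| * (1 + ‖w‖) ^ q :=
          mul_le_mul_of_nonneg_right (le_abs_self C) (by positivity)
        _ ≤ |C| * (2 * R) ^ q := by gcongr
        _ = |C| * 2 ^ q * R ^ q := by
          rw [Real.mul_rpow (by norm_num) hR0.le, ← mul_assoc]
    calc ‖iteratedDeriv 2 G c‖ ≤ (2).factorial * (|C| * 2 ^ q * R ^ q) / R ^ 2 :=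
          norm_iteratedDeriv_le_of_forall_mem_sphere_norm_le 2 hR0 hG.diffContOnCl hsphere
      _ = 2 * (|C| * 2 ^ q) * R ^ (-(2 - q)) := by
          rw [neg_sub, Real.rpow_sub hR0, Real.rpow_two, Nat.factorial_two]
          push_cast
          ring
  have hlim : Tendsto (fun R : ℝ => 2 * (|C| * 2 ^ q) * R ^ (-(2 - q))) atTop (𝓝 0) := by
    simpa using (tendsto_rpow_neg_atTop (by linarith : 0 < 2 - q)).const_mul (2 * (|C| * 2 ^ q))
  exact norm_le_zero_iff.1 (ge_of_tendsto hlim (eventually_atTop.2 ⟨1 + ‖c‖, hcauchy⟩))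

theorem eq_add_deriv_mul_of_iteratedDeriv_two_eq_zero {G : ℂ → ℂ}
    (hG : Differentiable ℂ G) (h : ∀ c, iteratedDeriv 2 G c = 0) (z : ℂ) :
    G z = G 0 + deriv G 0 * z := by
  have hG' (c : ℂ) : deriv G c = deriv G 0 :=
    is_const_of_deriv_eq_zero hG.deriv (fun c => by simpa [iteratedDeriv_succ] using h c) c 0
  have hlin (w : ℂ) : HasDerivAt (fun w => G w - deriv G 0 * w) 0 w := by
    simpa [hG' w] using (hG w).hasDerivAt.fun_sub ((hasDerivAt_id w).const_mul (deriv G 0))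
  have := is_const_of_deriv_eq_zero (fun w => (hlin w).differentiableAt)
    (fun w => (hlin w).deriv) z 0
  simp only [mul_zero, sub_zero] at this
  linear_combination this

theorem stmt_7 (f : ℂ → ℂ) (hf : Differentiable ℂ f)
    (hzeros : {z : ℂ | f z = 0}.Finite)
    (hord : ∀ ε : ℝ, 0 < ε → ∃ R : ℝ, 0 < R ∧ ∀ lam : ℂ, R ≤ ‖lam‖ →
      ‖f lam‖ ≤ Real.exp (‖lam‖ ^ ((1 : ℝ) + ε))) :
    ∃ (g : Polynomial ℂ) (c : ℂ), ∀ lam : ℂ,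
      f lam = g.eval lam * Complex.exp (c * lam) := by
  obtain ⟨P, h, hh, hh0, hfPh⟩ :=
    hf.exists_polynomial_mul_of_zeros_subset hzeros.toFinset (by simp)
  obtain ⟨G, hG, hhG⟩ := hh.exists_exp_eq hh0
  have hP : P ≠ 0 := by
    rintro rfl
    exact Set.infinite_univ (hzeros.subset fun z _ => by simp [hfPh])
  obtain ⟨R, -, hR⟩ := hord (1 / 2) one_half_pos
  have hgrowth : ∀ᶠ z in cobounded ℂ,
      ‖P.eval z * cexp (G z)‖ ≤ Real.exp (‖z‖ ^ ((1 : ℝ) + 1 / 2)) :=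
    hasBasis_cobounded_norm.eventually_iff.2
      ⟨R, trivial, fun z hz => by simpa [hfPh, hhG] using hR z hz⟩
  obtain ⟨K, hK⟩ := exists_re_le_mul_one_add_norm_rpow hG.continuous hP (by norm_num) hgrowth
  obtain ⟨K', hK'⟩ := hG.exists_norm_le_of_re_le (by norm_num) hK
  have hG'' := hG.iteratedDeriv_two_eq_zero_of_norm_le (by norm_num) (by norm_num) hK'
  refine ⟨C (cexp (G 0)) * P, deriv G 0, fun z => ?_⟩
  rw [hfPh, hhG, eq_add_deriv_mul_of_iteratedDeriv_two_eq_zero hG hG'' z, exp_add]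
  simp only [eval_mul, eval_C]
  ring
end

section
/- Let f(λ) = a_h(λ)e^{−s_h λ} + ⋯ + a_l(λ)e^{−s_l λ} where s_h < ⋯ < s_l are distinct real numbers and a_h, a_l are nonzero complex polynomials (with at least two terms). Then f(λ) = 0 has infinitely many roots in ℂ. -/
/-!
Write `ω_j = -s_j` and `d_j = deg a_j`. Along `λ = σ log y + i y`, `y → ∞`, the `j`-th term of `f`
has modulus of order `y ^ (d_j + σ ω_j)`; choose `σ` (an edge of the Newton polygon of the points
`(ω_j, d_j)`) so that the largest of these exponents, `W`, is attained at two indices. On a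
sequence of `y` along which the phases `exp (i ω_j y)` converge, `z ↦ f (σ log y + i y + z) / y ^ W`
converges locally uniformly to an exponential sum `∑ c_j exp (ω_j z)` with at least two nonzero
coefficients, and Hurwitz's theorem turns a zero of the limit into zeros of `f` with unbounded
imaginary parts.

Such a limit has a zero. Otherwise, after shifting its smallest frequency to `0`, it is bounded
below outside a vertical strip by its two extreme terms, and also inside the strip: near-zeros there
would, after vertical translation and the same compactness of phases, produce a limit with a zero
and hence, by Hurwitz again, a zero of the sum. Liouville's theorem applied to the reciprocal then
makes the sum constant, contradicting the growth of its largest term.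
-/

open Complex Filter Metric Bornology Polynomial Topology

theorem sum_subtype_eq_sum_of_eq_zero {ι M : Type*} [Fintype ι] [AddCommMonoid M] {p : ι → Prop}
    [Fintype (Subtype p)] {f : ι → M} (hf : ∀ i, ¬p i → f i = 0) :
    ∑ i : Subtype p, f i = ∑ i, f i := by
  classical
  rw [← Finset.sum_filter_of_ne (p := p) fun i _ h => by_contra fun hp => h (hf i hp)]
  exact (Finset.sum_subtype _ (fun i => by simp) f).symm

theorem tendstoLocallyUniformly_of_forall_tendsto_prod {α X β : Type*} [TopologicalSpace X]
    [UniformSpace β] {l : Filter α} {F : α → X → β} {f : X → β} (hf : Continuous f)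
    (h : ∀ x, Tendsto (fun q : α × X => F q.1 q.2) (l ×ˢ 𝓝 x) (𝓝 (f x))) :
    TendstoLocallyUniformly F f l :=
  tendstoLocallyUniformly_iff_forall_tendsto.mpr fun x =>
    (((hf.tendsto x).comp tendsto_snd).prodMk_nhds (h x)).mono_right (nhds_le_uniformity _)

theorem Differentiable.apply_eq_apply_of_forall_le_norm {h : ℂ → ℂ} (hh : Differentiable ℂ h)
    {δ : ℝ} (hδ : 0 < δ) (hle : ∀ z, δ ≤ ‖h z‖) (z w : ℂ) : h z = h w := by
  have hne : ∀ z, h z ≠ 0 := fun z => norm_pos_iff.mp (hδ.trans_le (hle z))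
  refine inv_injective ((hh.inv hne).apply_eq_apply_of_bounded ?_ z w)
  refine isBounded_iff_forall_norm_le.mpr ⟨δ⁻¹, ?_⟩
  rintro _ ⟨z, rfl⟩
  simpa only [Pi.inv_apply, norm_inv] using inv_anti₀ hδ (hle z)

theorem exists_eq_zero_mem_closedBall_of_norm_lt {g : ℂ → ℂ} (hg : Differentiable ℂ g) {c : ℂ}
    {ρ m : ℝ} (hρ : 0 < ρ) (hm : ∀ z ∈ sphere c ρ, m ≤ ‖g z‖) (hc : ‖g c‖ < m) :
    ∃ z ∈ closedBall c ρ, g z = 0 := by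
  by_contra! hne
  have hcl : closure (ball c ρ) = closedBall c ρ := closure_ball c hρ.ne'
  have hinv : DifferentiableOn ℂ (fun z => (g z)⁻¹) (closedBall c ρ) := fun z hz =>
    ((hg z).inv (hne z hz)).differentiableWithinAt
  have hmax := norm_le_of_forall_mem_frontier_norm_le isBounded_ball
    ⟨hinv.mono ball_subset_closedBall, hcl ▸ hinv.continuousOn⟩
    (C := m⁻¹) (fun z hz => by
      rw [frontier_ball c hρ.ne'] at hz
      rw [norm_inv]
      exact inv_anti₀ ((norm_nonneg _).trans_lt hc) (hm z hz))
    (hcl ▸ mem_closedBall_self hρ.le)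
  rw [norm_inv, inv_le_inv₀ (norm_pos_iff.mpr (hne c (mem_closedBall_self hρ.le)))
    ((norm_nonneg _).trans_lt hc)] at hmax
  exact hmax.not_gt hc

/-- Hurwitz's theorem. -/
theorem eventually_exists_eq_zero_of_tendstoLocallyUniformly {α : Type*} {l : Filter α}
    {g : α → ℂ → ℂ} {G : ℂ → ℂ} (hg : ∀ k, Differentiable ℂ (g k)) (hG : Differentiable ℂ G)
    (hconv : TendstoLocallyUniformly g G l) {w : ℂ} (hw : G w ≠ 0) {z₀ : ℂ} (hz₀ : G z₀ = 0)
    {U : Set ℂ} (hU : U ∈ 𝓝 z₀) : ∀ᶠ k in l, ∃ z ∈ U, g k z = 0 := by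
  have hisol : ∀ᶠ z in 𝓝[≠] z₀, G z ≠ 0 := by
    refine (hG.analyticAt z₀).eventually_eq_zero_or_eventually_ne_zero.resolve_left fun h => hw ?_
    have hGan : AnalyticOnNhd ℂ G Set.univ := analyticOnNhd_univ_iff_differentiable.mpr hG
    exact hGan.eqOn_zero_of_preconnected_of_eventuallyEq_zero isPreconnected_univ
      (Set.mem_univ z₀) h (Set.mem_univ w)
  obtain ⟨ε, hε, hball⟩ := Metric.eventually_nhds_iff_ball.mp
    ((eventually_nhdsWithin_iff.mp hisol).and hU)
  set ρ := ε / 2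
  have hρ : 0 < ρ := half_pos hε
  have hρε : closedBall z₀ ρ ⊆ ball z₀ ε := closedBall_subset_ball (half_lt_self hε)
  obtain ⟨z₁, hz₁, hmin⟩ := (isCompact_sphere z₀ ρ).exists_isMinOn
    (NormedSpace.sphere_nonempty.mpr hρ.le) hG.continuous.norm.continuousOn
  have hm : 0 < ‖G z₁‖ := norm_pos_iff.mpr <| (hball z₁ (hρε (sphere_subset_closedBall hz₁))).1
    (ne_of_mem_sphere hz₁ hρ.ne')
  have hunif := Metric.tendstoUniformlyOn_iff.mp
    (tendstoLocallyUniformly_iff_forall_isCompact.mp hconv _ (isCompact_closedBall z₀ ρ))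
    _ (half_pos hm)
  filter_upwards [hunif] with k hk
  obtain ⟨z, hz, hgz⟩ := exists_eq_zero_mem_closedBall_of_norm_lt (hg k) hρ (m := ‖G z₁‖ / 2)
    (fun z hz => by
      have := hk z (sphere_subset_closedBall hz)
      have := norm_sub_norm_le (G z) (g k z)
      rw [← dist_eq_norm] at this
      linarith [isMinOn_iff.mp hmin z hz])
    (by simpa [hz₀, dist_eq_norm] using hk z₀ (mem_closedBall_self hρ.le))
  exact ⟨z, (hball z (hρε hz)).2, hgz⟩

instance Complex.comap_re_atTop_neBot : (comap re atTop).NeBot :=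
  atTop_neBot.comap_of_surj re_surjective

theorem tendsto_exp_mul_comap_re_atTop {t : ℝ} (ht : t < 0) :
    Tendsto (fun z => exp (t * z)) (comap re atTop) (𝓝 0) := by
  refine tendsto_exp_comap_re_atBot.comp (tendsto_comap_iff.mpr ?_)
  simpa [Function.comp_def] using (tendsto_const_mul_atBot_of_neg ht).mpr tendsto_comap

noncomputable def expSum {ι : Type*} [Fintype ι] (c : ι → ℂ) (ω : ι → ℝ) (z : ℂ) : ℂ :=
  ∑ i, c i * exp (ω i * z)

section ExpSum

variable {ι : Type*} [Fintype ι] {c : ι → ℂ} {ω : ι → ℝ}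

theorem differentiable_expSum : Differentiable ℂ (expSum c ω) :=
  Differentiable.fun_sum fun _ _ =>
    (differentiable_exp.comp (differentiable_id.const_mul _)).const_mul _

theorem expSum_add (z w : ℂ) :
    expSum c ω (z + w) = expSum (fun i => c i * exp (ω i * w)) ω z := by
  simp only [expSum, mul_add, exp_add]
  exact Finset.sum_congr rfl fun i _ => by ring

theorem expSum_mul_exp (t : ℝ) (z : ℂ) :
    expSum c ω z * exp (t * z) = expSum c (fun i => ω i + t) z := by
  simp only [expSum, Finset.sum_mul, ofReal_add, add_mul, exp_add, mul_assoc]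

theorem expSum_neg (z : ℂ) : expSum c ω (-z) = expSum c (fun i => -ω i) z := by
  simp only [expSum, ofReal_neg, mul_neg, neg_mul]

theorem expSum_subtype_ne_zero (z : ℂ) :
    expSum (fun i : {i // c i ≠ 0} => c i) (fun i => ω i) z = expSum c ω z :=
  sum_subtype_eq_sum_of_eq_zero (f := fun i => c i * exp (ω i * z)) fun i hi => by
    simp [not_not.mp hi]

theorem tendstoLocallyUniformly_sum_mul_exp {α : Type*} {l : Filter α} {P : α → ℂ → ι → ℂ}
    {C : ι → ℂ} (hP : ∀ i x, Tendsto (fun q : α × ℂ => P q.1 q.2 i) (l ×ˢ 𝓝 x) (𝓝 (C i))) :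
    TendstoLocallyUniformly (fun k z => ∑ i, P k z i * exp (ω i * z)) (expSum C ω) l :=
  tendstoLocallyUniformly_of_forall_tendsto_prod differentiable_expSum.continuous fun x =>
    tendsto_finsetSum _ fun i _ => (hP i x).mul <|
      ((continuous_exp.comp (continuous_const.mul continuous_id)).tendsto x).comp tendsto_snd

theorem tendstoLocallyUniformly_expSum {α : Type*} {l : Filter α} {d : α → ι → ℂ} {C : ι → ℂ}
    (hd : ∀ i, Tendsto (fun k => d k i) l (𝓝 (C i))) :
    TendstoLocallyUniformly (fun k => expSum (d k) ω) (expSum C ω) l :=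
  tendstoLocallyUniformly_sum_mul_exp fun i _ => (hd i).comp tendsto_fst

theorem tendsto_expSum_mul_exp_neg {M : ι} (hM : ∀ j ≠ M, ω j < ω M) :
    Tendsto (fun z => expSum c ω z * exp (-ω M * z)) (comap re atTop) (𝓝 (c M)) := by
  classical
  simp_rw [← ofReal_neg, expSum_mul_exp, expSum]
  rw [show c M = ∑ j, if j = M then c j else 0 by simp]
  refine tendsto_finsetSum _ fun j _ => ?_
  split_ifs with hj
  · subst hj
    simp
  · simpa [← sub_eq_add_neg] using
      (tendsto_exp_mul_comap_re_atTop (sub_neg.mpr (hM j hj))).const_mul (c j)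

theorem exists_forall_le_norm_expSum {M : ι} (hM : ∀ j ≠ M, ω j < ω M) (hcM : c M ≠ 0)
    (hωM : 0 ≤ ω M) : ∃ X, ∀ z : ℂ, X ≤ z.re → ‖c M‖ / 2 ≤ ‖expSum c ω z‖ := by
  have hev := (tendsto_expSum_mul_exp_neg hM).norm.eventually
    (lt_mem_nhds (half_lt_self (norm_pos_iff.mpr hcM)))
  obtain ⟨X, hX⟩ := eventually_atTop.mp (eventually_comap.mp hev)
  refine ⟨max X 0, fun z hz => (hX z.re (le_of_max_le_left hz) z rfl).le.trans ?_⟩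
  rw [norm_mul, norm_exp]
  refine mul_le_of_le_one_right (norm_nonneg _) (Real.exp_le_one_iff.mpr ?_)
  simpa using mul_nonneg hωM (le_of_max_le_right hz)

theorem exists_expSum_ne_zero (hω : ω.Injective) (hc : ∃ i, c i ≠ 0) :
    ∃ z, expSum c ω z ≠ 0 := by
  obtain ⟨i, hi⟩ := hc
  have : Nonempty {i // c i ≠ 0} := ⟨⟨i, hi⟩⟩
  obtain ⟨M, hM⟩ := Finite.exists_max fun j : {i // c i ≠ 0} => ω j
  have hlim := tendsto_expSum_mul_exp_neg (c := fun i : {i // c i ≠ 0} => c i) (M := M)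
    fun j hj => (hM j).lt_of_ne fun h => hj (Subtype.ext (hω h))
  obtain ⟨z, hz⟩ := (hlim.eventually_ne M.2).exists
  exact ⟨z, by simpa [expSum_subtype_ne_zero] using left_ne_zero_of_mul hz⟩

theorem exists_expSum_eq_zero_of_forall_exists_norm_lt (hω : ω.Injective) (hc : ∃ i, c i ≠ 0)
    (R : ℝ) (hsmall : ∀ δ > 0, ∃ z : ℂ, |z.re| ≤ R ∧ ‖expSum c ω z‖ < δ) :
    ∃ z, expSum c ω z = 0 := by
  choose z hzR hz using fun k : ℕ => hsmall (1 / (k + 1)) Nat.one_div_pos_of_nat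
  have hK : IsCompact (Set.Icc (-R) R ×ˢ (Set.univ : Set (ι → Circle))) :=
    isCompact_Icc.prod isCompact_univ
  obtain ⟨⟨x, u⟩, -, φ, hφ, hlim⟩ := hK.tendsto_subseq
    (x := fun k => ((z k).re, fun i => Circle.exp (ω i * (z k).im)))
    fun k => ⟨abs_le.mp (hzR k), Set.mem_univ _⟩
  have hu : ∀ i, Tendsto (fun k => (Circle.exp (ω i * (z (φ k)).im) : ℂ)) atTop (𝓝 (u i)) :=
    fun i => ((by fun_prop : Continuous fun v : ℝ × (ι → Circle) => (v.2 i : ℂ)).tendsto _).comp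
      hlim
  set d : ℕ → ι → ℂ := fun k i => c i * Circle.exp (ω i * (z (φ k)).im)
  have htrans : ∀ k, expSum (d k) ω (z (φ k)).re = expSum c ω (z (φ k)) := by
    intro k
    conv_rhs => rw [← re_add_im (z (φ k)), expSum_add]
    simp only [d, Circle.coe_exp, ofReal_mul]
    congr 1
    funext i
    ring_nf
  have hconv : TendstoLocallyUniformly (fun k => expSum (d k) ω)
      (expSum (fun i => c i * u i) ω) atTop :=
    tendstoLocallyUniformly_expSum fun i => (hu i).const_mul (c i)
  have hzero : expSum (fun i => c i * u i) ω x = 0 := by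
    have hre : Tendsto (fun k => ((z (φ k)).re : ℂ)) atTop (𝓝 (x : ℂ)) :=
      (continuous_ofReal.tendsto x).comp ((continuous_fst.tendsto _).comp hlim)
    have hlim' := hconv.tendsto_comp differentiable_expSum.continuous.continuousAt hre
    simp only [htrans] at hlim'
    refine tendsto_nhds_unique hlim' (squeeze_zero_norm (fun k => (hz (φ k)).le) ?_)
    exact tendsto_one_div_add_atTop_nhds_zero_nat.comp hφ.tendsto_atTop
  obtain ⟨i, hi⟩ := hc
  obtain ⟨w, hw⟩ := exists_expSum_ne_zero (c := fun i => c i * u i) hω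
    ⟨i, mul_ne_zero hi (Circle.coe_ne_zero _)⟩
  obtain ⟨k, Z, -, hZ⟩ := (eventually_exists_eq_zero_of_tendstoLocallyUniformly
    (fun k => differentiable_expSum) differentiable_expSum hconv hw hzero univ_mem).exists
  refine ⟨Z + (z (φ k)).im * I, ?_⟩
  rw [expSum_add]
  simpa [d, Circle.coe_exp, mul_assoc, mul_comm I] using hZ

theorem exists_pos_forall_le_norm_expSum (hω : ω.Injective) {m M : ι}
    (hm : ∀ j ≠ m, ω m < ω j) (hM : ∀ j ≠ M, ω j < ω M) (hωm : ω m = 0) (hcm : c m ≠ 0)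
    (hcM : c M ≠ 0) (hne : ∀ z, expSum c ω z ≠ 0) : ∃ δ > 0, ∀ z, δ ≤ ‖expSum c ω z‖ := by
  have hωM : 0 ≤ ω M := by
    rcases eq_or_ne m M with rfl | hmM
    exacts [hωm.ge, hωm ▸ (hm M hmM.symm).le]
  obtain ⟨X₁, hX₁⟩ := exists_forall_le_norm_expSum (c := c) (ω := fun i => -ω i) (M := m)
    (fun j hj => neg_lt_neg (hm j hj)) hcm (by simp [hωm])
  obtain ⟨X₂, hX₂⟩ := exists_forall_le_norm_expSum hM hcM hωM
  obtain ⟨δ, hδ, hstrip⟩ : ∃ δ > 0, ∀ z : ℂ, |z.re| ≤ max X₁ X₂ → δ ≤ ‖expSum c ω z‖ := by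
    by_contra! h
    obtain ⟨z, hz⟩ := exists_expSum_eq_zero_of_forall_exists_norm_lt hω ⟨m, hcm⟩ _ h
    exact hne z hz
  refine ⟨min δ (min (‖c m‖ / 2) (‖c M‖ / 2)),
    lt_min hδ (lt_min (half_pos (norm_pos_iff.mpr hcm)) (half_pos (norm_pos_iff.mpr hcM))),
    fun z => ?_⟩
  by_cases hz : |z.re| ≤ max X₁ X₂
  · exact (min_le_left _ _).trans (hstrip z hz)
  rcases le_or_gt 0 z.re with h0 | h0
  · refine ((min_le_right _ _).trans (min_le_right _ _)).trans (hX₂ z ?_)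
    rw [abs_of_nonneg h0] at hz
    exact (le_max_right _ _).trans (not_le.mp hz).le
  · refine ((min_le_right _ _).trans (min_le_left _ _)).trans ?_
    rw [← neg_neg z, expSum_neg]
    refine hX₁ (-z) ?_
    rw [abs_of_neg h0] at hz
    simpa using (le_max_left _ _).trans (not_le.mp hz).le

theorem exists_expSum_eq_zero_of_forall_ne_zero [Nontrivial ι] (hω : ω.Injective)
    (hc : ∀ i, c i ≠ 0) : ∃ z, expSum c ω z = 0 := by
  obtain ⟨m, hm⟩ := Finite.exists_min ω
  obtain ⟨M, hM⟩ := Finite.exists_max ω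
  have hm' : ∀ j ≠ m, ω m < ω j := fun j hj => (hm j).lt_of_ne fun h => hj (hω h).symm
  have hM' : ∀ j ≠ M, ω j < ω M := fun j hj => (hM j).lt_of_ne fun h => hj (hω h)
  have hmM : ω m < ω M := by
    obtain ⟨j, hj⟩ := exists_ne m
    exact (hm' j hj).trans_le (hM j)
  set ν : ι → ℝ := fun i => ω i + -ω m
  have hνM : ∀ j ≠ M, ν j < ν M := fun j hj => by simp only [ν]; linarith [hM' j hj]
  have hνM_pos : 0 < ν M := by simp only [ν]; linarith
  by_contra! hne
  obtain ⟨δ, hδ, hle⟩ := exists_pos_forall_le_norm_expSum (c := c) (ω := ν)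
    (fun i j h => hω (add_right_cancel h)) (fun j hj => by simp only [ν]; linarith [hm' j hj])
    hνM (by simp [ν]) (hc m) (hc M) fun z => by
      rw [← expSum_mul_exp]
      exact mul_ne_zero (hne z) (exp_ne_zero _)
  have hconst := differentiable_expSum.apply_eq_apply_of_forall_le_norm hδ hle
  have hlim := tendsto_expSum_mul_exp_neg (c := c) hνM
  simp only [hconst _ 0] at hlim
  refine hc M (tendsto_nhds_unique hlim ?_)
  simpa using (tendsto_exp_mul_comap_re_atTop (neg_neg_of_pos hνM_pos)).const_mul (expSum c ν 0)

theorem exists_expSum_eq_zero (hω : ω.Injective) {i j : ι} (hij : i ≠ j) (hi : c i ≠ 0)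
    (hj : c j ≠ 0) : ∃ z, expSum c ω z = 0 := by
  have : Nontrivial {i // c i ≠ 0} := ⟨⟨⟨i, hi⟩, ⟨j, hj⟩, fun h => hij (congrArg Subtype.val h)⟩⟩
  obtain ⟨z, hz⟩ := exists_expSum_eq_zero_of_forall_ne_zero (c := fun k : {i // c i ≠ 0} => c k)
    (ω := fun k => ω k) (hω.comp Subtype.val_injective) fun k => k.2
  exact ⟨z, by rwa [expSum_subtype_ne_zero] at hz⟩

end ExpSum

theorem exists_ne_forall_add_mul_le {ι : Type*} [Finite ι] [Nontrivial ι] (d ω : ι → ℝ)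
    (hω : ω.Injective) : ∃ σ : ℝ, ∃ i j, i ≠ j ∧ d j + σ * ω j = d i + σ * ω i ∧
      ∀ k, d k + σ * ω k ≤ d i + σ * ω i := by
  obtain ⟨i, hi⟩ := Finite.exists_max ω
  have hlt : ∀ k ≠ i, 0 < ω i - ω k := fun k hk =>
    sub_pos.mpr ((hi k).lt_of_ne fun h => hk (hω h))
  have : Nonempty {k // k ≠ i} := let ⟨j, hj⟩ := exists_ne i; ⟨⟨j, hj⟩⟩
  obtain ⟨⟨j, hj⟩, hmax⟩ := Finite.exists_max fun k : {k // k ≠ i} => (d k - d i) / (ω i - ω k)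
  refine ⟨(d j - d i) / (ω i - ω j), i, j, hj.symm, ?_, fun k => ?_⟩
  · field_simp [(hlt j hj).ne']
    ring
  · rcases eq_or_ne k i with rfl | hk
    · rfl
    have := (div_le_iff₀ (hlt k hk)).mp (hmax ⟨k, hk⟩)
    rw [mul_sub] at this
    linarith

theorem tendsto_eval_div_pow_natDegree {𝕜 α : Type*} [NormedField 𝕜] {l : Filter α}
    {w c : α → 𝕜} (p : 𝕜[X]) (hc : Tendsto c l (cobounded 𝕜))
    (hw : Tendsto (fun x => w x / c x) l (𝓝 1)) :
    Tendsto (fun x => p.eval (w x) / c x ^ p.natDegree) l (𝓝 p.leadingCoeff) := by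
  have hw' : Tendsto w l (cobounded 𝕜) := by
    rw [← tendsto_norm_atTop_iff_cobounded] at hc ⊢
    refine (hw.norm.pos_mul_atTop (by simp) hc).congr' ?_
    filter_upwards [hc.eventually_gt_atTop 0] with x hx
    rw [norm_div, div_mul_cancel₀ _ hx.ne']
  refine ((isEquivalent_cobounded_leading_monomial.comp_tendsto hw').div
    (Asymptotics.IsEquivalent.refl (u := fun x => c x ^ p.natDegree))).symm.tendsto_nhds ?_
  convert (hw.pow p.natDegree).const_mul p.leadingCoeff using 1
  · ext x
    simp [div_pow, mul_div_assoc]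
  · simp

theorem ofReal_mul_I_pow_mul_exp {y : ℝ} (hy : 0 < y) (σ ω : ℝ) (d : ℕ) :
    (y * I) ^ d * exp (ω * ((σ * Real.log y : ℝ) + y * I)) =
      (y ^ ((d : ℝ) + σ * ω) : ℝ) * (I ^ d * exp ((ω * y : ℝ) * I)) := by
  rw [Real.rpow_add hy, Real.rpow_natCast, Real.rpow_def_of_pos hy, mul_add, exp_add]
  push_cast
  ring_nf

section Rescaling

variable {y : ℕ → ℝ}

theorem tendsto_ofReal_rpow_mul_of_nonpos (hy : Tendsto y atTop atTop) {e : ℝ} (he : e ≤ 0)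
    {θ : ℕ → ℂ} {v : ℂ} (hθ : Tendsto θ atTop (𝓝 v)) :
    Tendsto (fun k => ((y k ^ e : ℝ) : ℂ) * θ k) atTop (𝓝 (if e = 0 then v else 0)) := by
  split_ifs with h
  · simpa [h] using hθ
  · have hpow : Tendsto (fun k => y k ^ e) atTop (𝓝 0) := by
      simpa [Function.comp_def] using
        (tendsto_rpow_neg_atTop (neg_pos.mpr (he.lt_of_ne h))).comp hy
    simpa using ((continuous_ofReal.tendsto 0).comp hpow).mul hθ

theorem tendsto_ofReal_mul_I_cobounded (hy : Tendsto y atTop atTop) :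
    Tendsto (fun k => (y k : ℂ) * I) atTop (cobounded ℂ) := by
  rw [← tendsto_norm_atTop_iff_cobounded]
  simpa [Function.comp_def] using tendsto_abs_atTop_atTop.comp hy

theorem tendsto_add_div_ofReal_mul_I {σ : ℝ} (hy₀ : ∀ k, 0 < y k) (hy : Tendsto y atTop atTop)
    (x : ℂ) :
    Tendsto (fun q : ℕ × ℂ => (((σ * Real.log (y q.1) : ℝ) : ℂ) + y q.1 * I + q.2) / (y q.1 * I))
      (atTop ×ˢ 𝓝 x) (𝓝 1) := by
  have hlog : Tendsto (fun k => σ * (Real.log (y k) / y k)) atTop (𝓝 0) := by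
    simpa [Function.comp_def] using
      (Real.isLittleO_log_id_atTop.tendsto_div_nhds_zero.comp hy).const_mul σ
  have hinv := tendsto_inv₀_cobounded.comp ((tendsto_ofReal_mul_I_cobounded hy).comp
    (tendsto_fst (g := 𝓝 x)))
  have hlim := ((((continuous_ofReal.tendsto 0).comp hlog).div_const I).comp
    tendsto_fst).add_const 1 |>.add ((tendsto_snd (f := atTop)).mul hinv)
  rw [ofReal_zero, zero_div, zero_add, mul_zero, add_zero] at hlim
  refine hlim.congr fun q => ?_
  have : (y q.1 : ℂ) ≠ 0 := ofReal_ne_zero.mpr (hy₀ q.1).ne'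
  simp only [Function.comp_apply]
  push_cast
  field_simp

variable {ι : Type*} [Fintype ι] {ω : ι → ℝ}

theorem tendstoLocallyUniformly_sum_eval_mul_exp_div_rpow {σ W : ℝ} (a : ι → ℂ[X])
    (hy₀ : ∀ k, 0 < y k) (hy : Tendsto y atTop atTop) {u : ι → ℂ}
    (hu : ∀ j, Tendsto (fun k => exp ((ω j * y k : ℝ) * I)) atTop (𝓝 (u j)))
    (hW : ∀ j, (a j).natDegree + σ * ω j ≤ W) :
    TendstoLocallyUniformly
      (fun k z => (∑ j, (a j).eval ((σ * Real.log (y k) : ℝ) + y k * I + z) *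
        exp (ω j * ((σ * Real.log (y k) : ℝ) + y k * I + z))) / (y k ^ W : ℝ))
      (expSum (fun j => (a j).leadingCoeff *
        if (a j).natDegree + σ * ω j - W = 0 then I ^ (a j).natDegree * u j else 0) ω) atTop := by
  set T : ℕ → ℂ := fun k => (σ * Real.log (y k) : ℝ) + y k * I
  set β : ι → ℕ → ℂ := fun j k => (y k * I) ^ (a j).natDegree * exp (ω j * T k) / (y k ^ W : ℝ)
  have hβ : ∀ j, Tendsto (β j) atTop
      (𝓝 (if (a j).natDegree + σ * ω j - W = 0 then I ^ (a j).natDegree * u j else 0)) := by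
    intro j
    refine (tendsto_ofReal_rpow_mul_of_nonpos hy (by linarith [hW j]) ((hu j).const_mul _)).congr
      fun k => ?_
    simp only [β, T]
    rw [ofReal_mul_I_pow_mul_exp (hy₀ k), Real.rpow_sub (hy₀ k), ofReal_div]
    ring
  refine (tendstoLocallyUniformly_sum_mul_exp (P := fun k z j =>
      (a j).eval (T k + z) / (y k * I) ^ (a j).natDegree * β j k) fun j x =>
    (tendsto_eval_div_pow_natDegree (a j) ?_ (tendsto_add_div_ofReal_mul_I hy₀ hy x)).mul
      ((hβ j).comp tendsto_fst)).congr fun k z => ?_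
  · exact (tendsto_ofReal_mul_I_cobounded hy).comp tendsto_fst
  · have : (y k : ℂ) * I ≠ 0 := mul_ne_zero (ofReal_ne_zero.mpr (hy₀ k).ne') I_ne_zero
    simp only [Finset.sum_div]
    refine Finset.sum_congr rfl fun j _ => ?_
    change _ = (a j).eval (T k + z) * exp (ω j * (T k + z)) / _
    rw [mul_add, exp_add]
    simp only [β]
    field_simp

end Rescaling

section Infinite

variable {ι : Type*} [Fintype ι] {ω : ι → ℝ}

theorem infinite_setOf_sum_eval_mul_exp_eq_zero_of_forall_ne_zero [Nontrivial ι] (a : ι → ℂ[X])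
    (hω : ω.Injective) (ha : ∀ j, a j ≠ 0) :
    {z : ℂ | ∑ j, (a j).eval z * exp (ω j * z) = 0}.Infinite := by
  obtain ⟨σ, i, j, hij, hji, hmax⟩ :=
    exists_ne_forall_add_mul_le (fun j => ((a j).natDegree : ℝ)) ω hω
  obtain ⟨u, φ, hφ, hu⟩ :=
    CompactSpace.tendsto_subseq fun n : ℕ => fun j => Circle.exp (ω j * (n + 1))
  set y : ℕ → ℝ := fun k => φ k + 1
  have hy : Tendsto y atTop atTop :=
    tendsto_atTop_add_const_right _ 1 (tendsto_natCast_atTop_atTop.comp hφ.tendsto_atTop)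
  have hconv := tendstoLocallyUniformly_sum_eval_mul_exp_div_rpow a (fun k => by positivity) hy
    (fun j => ((by fun_prop : Continuous fun v : ι → Circle => (v j : ℂ)).tendsto u).comp hu)
    hmax
  set C : ι → ℂ := fun k => (a k).leadingCoeff *
    if (a k).natDegree + σ * ω k - ((a i).natDegree + σ * ω i) = 0 then I ^ (a k).natDegree * u k
    else 0
  have hC : ∀ k, (a k).natDegree + σ * ω k = (a i).natDegree + σ * ω i → C k ≠ 0 := fun k hk => by
    simp only [C, hk, sub_self, if_true]
    exact mul_ne_zero (leadingCoeff_ne_zero.mpr (ha k))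
      (mul_ne_zero (pow_ne_zero _ I_ne_zero) (Circle.coe_ne_zero _))
  obtain ⟨z₀, hz₀⟩ := exists_expSum_eq_zero hω hij (hC i rfl) (hC j hji)
  obtain ⟨w, hw⟩ := exists_expSum_ne_zero hω ⟨i, hC i rfl⟩
  have hzeros := eventually_exists_eq_zero_of_tendstoLocallyUniformly (fun k => by fun_prop)
    differentiable_expSum hconv hw hz₀ (ball_mem_nhds z₀ one_pos)
  refine Set.Infinite.of_image im (Set.infinite_of_not_bddAbove fun ⟨R, hR⟩ => ?_)
  obtain ⟨k, ⟨z, hz, hFz⟩, hk⟩ := (hzeros.and (hy.eventually_gt_atTop (R + ‖z₀‖ + 1))).exists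
  have hmem := hR ⟨_, (div_eq_zero_iff.mp hFz).resolve_right
    (ofReal_ne_zero.mpr (Real.rpow_pos_of_pos (by positivity) _).ne'), rfl⟩
  simp only [add_im, ofReal_im, mul_im, ofReal_re, I_im, I_re, mul_zero, mul_one, zero_add,
    add_zero] at hmem
  rw [mem_ball_iff_norm] at hz
  linarith [neg_abs_le z.im, abs_im_le_norm z, norm_sub_norm_le z z₀]

theorem infinite_setOf_sum_eval_mul_exp_eq_zero (a : ι → ℂ[X]) (hω : ω.Injective) {i j : ι}
    (hij : i ≠ j) (hi : a i ≠ 0) (hj : a j ≠ 0) :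
    {z : ℂ | ∑ k, (a k).eval z * exp (ω k * z) = 0}.Infinite := by
  have : Nontrivial {k // a k ≠ 0} := ⟨⟨⟨i, hi⟩, ⟨j, hj⟩, fun h => hij (congrArg Subtype.val h)⟩⟩
  have hsum : ∀ z, ∑ k : {k // a k ≠ 0}, (a k).eval z * exp (ω k * z) =
      ∑ k, (a k).eval z * exp (ω k * z) := fun z =>
    sum_subtype_eq_sum_of_eq_zero (f := fun k => (a k).eval z * exp (ω k * z)) fun k hk => by
      simp [not_not.mp hk]
  simpa only [hsum] using infinite_setOf_sum_eval_mul_exp_eq_zero_of_forall_ne_zero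
    (fun k : {k // a k ≠ 0} => a k) (ω := fun k : {k // a k ≠ 0} => ω k)
    (hω.comp Subtype.val_injective) fun k => k.2

end Infinite

theorem stmt_10 (m : ℕ) (s : Fin (m + 2) → ℝ) (hs : StrictMono s)
    (a : Fin (m + 2) → Polynomial ℂ)
    (hah : a 0 ≠ 0) (hal : a (Fin.last (m + 1)) ≠ 0) :
    {lam : ℂ | (∑ j : Fin (m + 2),
        (a j).eval lam * Complex.exp (-(s j : ℂ) * lam)) = 0}.Infinite := by
  simpa using infinite_setOf_sum_eval_mul_exp_eq_zero a (ω := fun j => -s j)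
    (neg_injective.comp hs.injective) Fin.last_pos'.ne hah hal
end

section
/- Let M : [0,τ] → ℂ be continuous with τ > 0. If there exist p, q ∈ ℂ with ∫₀^τ M(θ)e^{−λθ} dθ = pλ + q for all λ ∈ ℂ, then M is identically zero (and p = q = 0). -/
/-!
Along real `λ → +∞` the left-hand side tends to `0` by dominated convergence, which forces the
affine function `p λ + q` to vanish. Then `∫ M(θ) (e^{-θ})ⁿ dθ = 0` for all `n ∈ ℕ`. Since
`θ ↦ e^{-θ}` is injective on `[0, τ]`, Stone–Weierstrass makes polynomials in `e^{-θ}` uniformly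
dense among continuous functions there, so `M` is orthogonal to `conj M`, i.e. `∫ |M|² = 0`.
-/

open MeasureTheory Filter Topology Set Polynomial
open scoped Interval

theorem tendsto_integral_mul_cexp_neg_mul_atTop {f : ℝ → ℂ} {τ : ℝ} (hτ : 0 ≤ τ)
    (hf : IntervalIntegrable f volume 0 τ) :
    Tendsto (fun t : ℝ => ∫ θ in (0 : ℝ)..τ, f θ * Complex.exp (-t * θ)) atTop (𝓝 0) := by
  have hlim : ∀ θ ∈ Ι 0 τ, Tendsto (fun t : ℝ => f θ * Complex.exp (-t * θ)) atTop (𝓝 0) := by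
    intro θ hθ
    rw [uIoc_of_le hτ] at hθ
    rw [tendsto_zero_iff_norm_tendsto_zero]
    have hdecay := Real.tendsto_exp_atBot.comp (tendsto_neg_atTop_atBot.atBot_mul_const hθ.1)
    simpa [Function.comp_def, Complex.norm_exp] using hdecay.const_mul ‖f θ‖
  have hbound : ∀ t : ℝ, 0 ≤ t → ∀ θ ∈ Ι 0 τ, ‖f θ * Complex.exp (-t * θ)‖ ≤ ‖f θ‖ := by
    intro t ht θ hθ
    rw [uIoc_of_le hτ] at hθ
    rw [norm_mul, Complex.norm_exp]
    refine mul_le_of_le_one_right (norm_nonneg _) (Real.exp_le_one_iff.mpr ?_)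
    simpa using mul_nonneg ht hθ.1.le
  simpa using intervalIntegral.tendsto_integral_filter_of_dominated_convergence
    (F := fun (t θ : ℝ) => f θ * Complex.exp (-t * θ)) (fun θ => ‖f θ‖)
    (Eventually.of_forall fun t => hf.def'.1.mul
      (by fun_prop : Continuous fun θ : ℝ => Complex.exp (-t * θ)).aestronglyMeasurable)
    (by filter_upwards [eventually_ge_atTop 0] with t ht using ae_of_all _ (hbound t ht))
    hf.norm (ae_of_all _ hlim)

theorem eq_zero_of_tendsto_mul_add {p q : ℂ}
    (h : Tendsto (fun t : ℝ => p * t + q) atTop (𝓝 0)) : p = 0 ∧ q = 0 := by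
  have hinv : Tendsto (fun t : ℝ => (t : ℂ)⁻¹) atTop (𝓝 0) := by
    simpa [Function.comp_def] using
      (Complex.continuous_ofReal.tendsto 0).comp tendsto_inv_atTop_zero
  have hp : Tendsto (fun t : ℝ => (p * t + q) * (t : ℂ)⁻¹) atTop (𝓝 p) := by
    have : Tendsto (fun t : ℝ => p + q * (t : ℂ)⁻¹) atTop (𝓝 p) := by
      simpa using tendsto_const_nhds.add (hinv.const_mul q)
    refine this.congr' ?_
    filter_upwards [eventually_ne_atTop 0] with t ht
    have : (t : ℂ) ≠ 0 := by exact_mod_cast ht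
    field_simp
  obtain rfl : p = 0 := tendsto_nhds_unique hp (by simpa using h.mul hinv)
  simpa using h

theorem exists_polynomial_comp_near {K : Set ℝ} (hK : IsCompact K) {φ : ℝ → ℝ}
    (hφ : ContinuousOn φ K) (hφK : InjOn φ K) {g : ℝ → ℝ} (hg : ContinuousOn g K)
    {ε : ℝ} (hε : 0 < ε) : ∃ P : ℝ[X], ∀ x ∈ K, |P.eval (φ x) - g x| < ε := by
  have : CompactSpace K := isCompact_iff_compactSpace.mp hK
  let ψ : C(K, ℝ) := ⟨K.domRestrict φ, hφ.domRestrict⟩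
  have hsep : (Algebra.adjoin ℝ {ψ}).SeparatesPoints := fun x y hxy =>
    ⟨ψ, mem_image_of_mem _ (Algebra.subset_adjoin rfl),
      fun h => hxy (Subtype.ext (hφK x.2 y.2 h))⟩
  let γ : C(K, ℝ) := ⟨K.domRestrict g, hg.domRestrict⟩
  obtain ⟨⟨_, hmem⟩, hnear⟩ :=
    ContinuousMap.exists_mem_subalgebra_near_continuousMap_of_separatesPoints _ hsep γ ε hε
  rw [Algebra.adjoin_singleton_eq_range_aeval] at hmem
  obtain ⟨P, rfl⟩ := hmem
  refine ⟨P, fun x hx => lt_of_le_of_lt ?_ hnear⟩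
  simpa [aeval_continuousMap_apply, γ, ψ] using (aeval ψ P - γ).norm_coe_le_norm ⟨x, hx⟩

theorem exists_complex_polynomial_comp_near {K : Set ℝ} (hK : IsCompact K) {φ : ℝ → ℝ}
    (hφ : ContinuousOn φ K) (hφK : InjOn φ K) {g : ℝ → ℂ} (hg : ContinuousOn g K)
    {ε : ℝ} (hε : 0 < ε) : ∃ P : ℂ[X], ∀ x ∈ K, ‖P.eval (φ x : ℂ) - g x‖ < ε := by
  obtain ⟨P, hP⟩ := exists_polynomial_comp_near hK hφ hφK
    (Complex.continuous_re.comp_continuousOn hg) (half_pos hε)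
  obtain ⟨Q, hQ⟩ := exists_polynomial_comp_near hK hφ hφK
    (Complex.continuous_im.comp_continuousOn hg) (half_pos hε)
  refine ⟨P.map Complex.ofRealHom + C Complex.I * Q.map Complex.ofRealHom, fun x hx => ?_⟩
  have hmap : ∀ R : ℝ[X], (R.map Complex.ofRealHom).eval (φ x : ℂ) = ((R.eval (φ x) : ℝ) : ℂ) :=
    fun R => by rw [eval_map]; exact eval₂_at_apply Complex.ofRealHom (φ x)
  have hsplit : (P.map Complex.ofRealHom + C Complex.I * Q.map Complex.ofRealHom).eval (φ x : ℂ)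
        - g x =
      ((P.eval (φ x) - (g x).re : ℝ) : ℂ) + ((Q.eval (φ x) - (g x).im : ℝ) : ℂ) * Complex.I := by
    apply Complex.ext <;> simp [hmap]
  calc _ ≤ |P.eval (φ x) - (g x).re| + |Q.eval (φ x) - (g x).im| := by
        rw [hsplit]
        refine (norm_add_le _ _).trans_eq ?_
        rw [norm_mul, Complex.norm_I, mul_one, Complex.norm_real, Complex.norm_real,
          Real.norm_eq_abs, Real.norm_eq_abs]
    _ < ε / 2 + ε / 2 := add_lt_add (hP x hx) (hQ x hx)
    _ = ε := add_halves ε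

section Moments

variable {a b : ℝ} {f : ℝ → ℂ} {φ : ℝ → ℝ}

theorem integral_mul_eval_eq_zero_of_moments (hf : IntervalIntegrable f volume a b)
    (hφ : ContinuousOn φ [[a, b]]) (hmom : ∀ n : ℕ, ∫ x in a..b, f x * (φ x : ℂ) ^ n = 0)
    (P : ℂ[X]) : ∫ x in a..b, f x * P.eval (φ x : ℂ) = 0 := by
  induction P using Polynomial.induction_on' with
  | add P Q hP hQ =>
    have hint : ∀ R : ℂ[X], IntervalIntegrable (fun x => f x * R.eval (φ x : ℂ)) volume a b :=
      fun R => hf.mul_continuousOn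
        (R.continuous.comp_continuousOn (Complex.continuous_ofReal.comp_continuousOn hφ))
    simp only [eval_add, mul_add]
    rw [intervalIntegral.integral_add (hint P) (hint Q), hP, hQ, add_zero]
  | monomial n c =>
    simp only [eval_monomial, mul_left_comm (f _)]
    rw [intervalIntegral.integral_const_mul, hmom n, mul_zero]

theorem integral_mul_eq_zero_of_moments (hf : ContinuousOn f [[a, b]])
    (hφ : ContinuousOn φ [[a, b]]) (hφi : InjOn φ [[a, b]])
    (hmom : ∀ n : ℕ, ∫ x in a..b, f x * (φ x : ℂ) ^ n = 0) {g : ℝ → ℂ}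
    (hg : ContinuousOn g [[a, b]]) : ∫ x in a..b, f x * g x = 0 := by
  obtain ⟨C, hC⟩ := isCompact_uIcc.exists_bound_of_continuousOn hf
  have hC0 : 0 ≤ C := (norm_nonneg _).trans (hC a left_mem_uIcc)
  set L := C * |b - a|
  refine eq_of_forall_dist_le fun ε hε => ?_
  obtain ⟨P, hP⟩ := exists_complex_polynomial_comp_near isCompact_uIcc hφ hφi hg
    (div_pos hε (by positivity : 0 < L + 1))
  have hPφ : ContinuousOn (fun x => P.eval (φ x : ℂ)) [[a, b]] :=
    P.continuous.comp_continuousOn (Complex.continuous_ofReal.comp_continuousOn hφ)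
  have hdiff : ∫ x in a..b, f x * g x = ∫ x in a..b, f x * (g x - P.eval (φ x : ℂ)) := by
    simp only [mul_sub]
    rw [intervalIntegral.integral_sub (hf.intervalIntegrable.mul_continuousOn hg)
      (hf.intervalIntegrable.mul_continuousOn hPφ),
      integral_mul_eval_eq_zero_of_moments hf.intervalIntegrable hφ hmom, sub_zero]
  calc dist (∫ x in a..b, f x * g x) 0
      = ‖∫ x in a..b, f x * (g x - P.eval (φ x : ℂ))‖ := by rw [dist_zero_right, hdiff]
    _ ≤ C * (ε / (L + 1)) * |b - a| := by
      refine intervalIntegral.norm_integral_le_of_norm_le_const fun x hx => ?_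
      have hx' := uIoc_subset_uIcc hx
      rw [norm_mul, norm_sub_rev]
      exact mul_le_mul (hC x hx') (hP x hx').le (norm_nonneg _) hC0
    _ = L / (L + 1) * ε := by ring
    _ ≤ ε := mul_le_of_le_one_left hε.le ((div_le_one (by positivity)).mpr (by linarith))

theorem eqOn_zero_of_forall_integral_mul_pow_eq_zero (hab : a < b)
    (hf : ContinuousOn f (Icc a b)) (hφ : ContinuousOn φ (Icc a b)) (hφi : InjOn φ (Icc a b))
    (hmom : ∀ n : ℕ, ∫ x in a..b, f x * (φ x : ℂ) ^ n = 0) : EqOn f 0 (Icc a b) := by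
  have hI : [[a, b]] = Icc a b := uIcc_of_le hab.le
  have hconj : ∫ x in a..b, f x * starRingEnd ℂ (f x) = 0 := by
    rw [← hI] at hf hφ hφi
    exact integral_mul_eq_zero_of_moments hf hφ hφi hmom
      (Complex.continuous_conj.comp_continuousOn hf)
  have hsq : ∫ x in a..b, Complex.normSq (f x) = 0 := by
    exact_mod_cast intervalIntegral.integral_ofReal.symm.trans
      ((intervalIntegral.integral_congr fun x _ => (Complex.mul_conj (f x)).symm).trans hconj)
  intro x hx
  by_contra hne
  exact (intervalIntegral.integral_pos hab (Complex.continuous_normSq.comp_continuousOn hf)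
    (fun y _ => Complex.normSq_nonneg _) ⟨x, hx, Complex.normSq_pos.mpr hne⟩).ne' hsq

end Moments

theorem stmt_15 (τ : ℝ) (hτ : 0 < τ) (M : ℝ → ℂ)
    (hM : ContinuousOn M (Set.Icc 0 τ)) (p q : ℂ)
    (h : ∀ lam : ℂ, (∫ θ in (0 : ℝ)..τ, M θ * Complex.exp (-lam * θ)) = p * lam + q) :
    (∀ θ ∈ Set.Icc (0 : ℝ) τ, M θ = 0) ∧ p = 0 ∧ q = 0 := by
  have hdecay : Tendsto (fun t : ℝ => p * t + q) atTop (𝓝 0) := by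
    simpa only [h] using tendsto_integral_mul_cexp_neg_mul_atTop hτ.le
      (hM.intervalIntegrable_of_Icc hτ.le)
  obtain ⟨rfl, rfl⟩ := eq_zero_of_tendsto_mul_add hdecay
  refine ⟨eqOn_zero_of_forall_integral_mul_pow_eq_zero hτ hM (by fun_prop)
    (Real.exp_injective.comp neg_injective).injOn fun n => ?_, rfl, rfl⟩
  simpa [← Complex.exp_nat_mul, Complex.ofReal_exp] using h n
end

section
/- Suppose g is a complex polynomial, c ∈ ℂ, a ∈ ℂ, τ > 0, and M : [0,τ] → ℂ is continuous, not identically zero, and λ − a − ∫₀^τ M(θ)e^{−λθ} dθ = g(λ)e^{cλ} for all λ ∈ ℂ. Then this leads to a contradiction; i.e., no such g and c exist. -/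
open Filter Asymptotics Polynomial Set MeasureTheory Topology

/-!
For `Re z ≥ 0` the integral is bounded, so `‖g z‖ * exp (Re (c z)) = ‖z‖ + O(1)` on the closed
right half-plane. A polynomial cannot compensate exponential decay, so along the rays `t`, `t i`,
`-t i` this forces `Re c ≥ 0` and `Im c = 0`; it cannot beat exponential growth either, which
along the positive reals forces `Re c ≤ 0`. With `c = 0` the integral is the polynomial
`z - a - g z`, which tends to `0` along the positive reals and therefore vanishes. So
`∫ M θ * exp (-n θ) = 0` for all `n : ℕ`. The powers of `θ ↦ exp (-θ)` generate a dense
subalgebra of `C([0, τ], ℂ)` (Stone–Weierstrass), hence `∫ M f = 0` for every continuous `f`;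
taking `f = conj M` gives `∫ |M|² = 0`, so `M = 0`.
-/

namespace Polynomial

lemma isBigO_eval_pow_natDegree (p : ℂ[X]) {z : ℝ → ℂ} (hz : ∀ᶠ t in atTop, ‖z t‖ ≤ t) :
    (fun t => p.eval (z t)) =O[atTop] fun t : ℝ => t ^ p.natDegree := by
  have hz' : z =O[atTop] fun t : ℝ => t :=
    IsBigO.of_bound 1 <| by
      filter_upwards [hz, eventually_ge_atTop 0] with t ht ht0
      rwa [one_mul, Real.norm_of_nonneg ht0]
  simp_rw [eval_eq_sum_range]
  refine IsBigO.fun_sum fun i hi => ?_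
  show (fun t : ℝ => p.coeff i * z t ^ i) =O[atTop] _
  refine ((hz'.pow i).const_mul_left _).trans ?_
  refine IsBigO.of_bound 1 ?_
  filter_upwards [eventually_ge_atTop 1] with t ht
  rw [one_mul, norm_pow, norm_pow, Real.norm_of_nonneg (by linarith)]
  exact pow_le_pow_right₀ ht (Nat.lt_succ_iff.mp (Finset.mem_range.mp hi))

lemma one_isBigO_eval_ofReal {p : ℂ[X]} (hp : p ≠ 0) :
    (fun _ : ℝ => (1 : ℂ)) =O[atTop] fun t : ℝ => p.eval (t : ℂ) := by
  rcases le_or_gt p.degree 0 with hdeg | hdeg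
  · rw [eq_C_of_degree_le_zero hdeg] at hp ⊢
    simpa using isBigO_const_const (1 : ℂ) (C_ne_zero.mp hp) (atTop : Filter ℝ)
  · have hnorm : Tendsto (fun t : ℝ => ‖p.eval (t : ℂ)‖) atTop atTop :=
      p.tendsto_norm_atTop hdeg <| by simpa using tendsto_abs_atTop_atTop
    refine IsBigO.of_bound 1 ?_
    filter_upwards [hnorm.eventually_ge_atTop 1] with t ht
    simpa using ht

lemma eq_zero_of_tendsto_eval_ofReal {p : ℂ[X]}
    (h : Tendsto (fun t : ℝ => p.eval (t : ℂ)) atTop (𝓝 0)) : p = 0 := by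
  by_contra hp
  have := (one_isBigO_eval_ofReal hp).trans_tendsto h
  exact one_ne_zero (tendsto_nhds_unique tendsto_const_nhds this)

end Polynomial

lemma nonpos_of_exp_mul_isBigO_pow {b : ℝ} {n : ℕ}
    (h : (fun t : ℝ => Real.exp (b * t)) =O[atTop] fun t : ℝ => t ^ n) : b ≤ 0 := by
  by_contra! hb
  exact isLittleO_irrefl (l := atTop) (Frequently.of_forall fun t => (Real.exp_pos (b * t)).ne')
    (h.trans_isLittleO (isLittleO_pow_exp_pos_mul_atTop n hb))

lemma nonpos_of_mul_exp_le_norm_eval (p : ℂ[X]) {z : ℝ → ℂ} (hz : ∀ᶠ t in atTop, ‖z t‖ ≤ t)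
    {b K : ℝ} (h : ∀ᶠ t in atTop, (t - K) * Real.exp (b * t) ≤ ‖p.eval (z t)‖) : b ≤ 0 := by
  refine nonpos_of_exp_mul_isBigO_pow <| IsBigO.trans ?_ (p.isBigO_eval_pow_natDegree hz)
  refine IsBigO.of_bound 1 ?_
  filter_upwards [h, eventually_ge_atTop (K + 1)] with t ht htK
  rw [Real.norm_of_nonneg (Real.exp_pos _).le, one_mul]
  nlinarith [Real.exp_pos (b * t)]

lemma nonpos_of_norm_eval_mul_exp_le {p : ℂ[X]} (hp : p ≠ 0) {b K : ℝ}
    (h : ∀ᶠ t : ℝ in atTop, ‖p.eval (t : ℂ)‖ * Real.exp (b * t) ≤ t + K) : b ≤ 0 := by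
  have hexp : (fun t : ℝ => Real.exp (b * t)) =O[atTop]
      fun t : ℝ => ‖p.eval (t : ℂ)‖ * Real.exp (b * t) := by
    simpa using
      (one_isBigO_eval_ofReal hp).norm_norm.mul (isBigO_refl (fun t => Real.exp (b * t)) _)
  have hbound :
      (fun t : ℝ => ‖p.eval (t : ℂ)‖ * Real.exp (b * t)) =O[atTop] fun t : ℝ => t + K := by
    refine IsBigO.of_bound 1 ?_
    filter_upwards [h] with t ht
    rw [one_mul, Real.norm_of_nonneg (by positivity)]
    exact ht.trans (Real.le_norm_self _)
  have hlin : (fun t : ℝ => t + K) =O[atTop] fun t : ℝ => t ^ 1 := by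
    simpa using (isBigO_refl (fun t : ℝ => t) atTop).add (isLittleO_const_id_atTop K).isBigO
  exact nonpos_of_exp_mul_isBigO_pow (hexp.trans (hbound.trans hlin))

theorem eq_zero_of_sub_eq_eval_mul_exp {F : ℂ → ℂ} {K : ℝ}
    (hF : ∀ z : ℂ, 0 ≤ z.re → ‖F z‖ ≤ K) {g : ℂ[X]} {c : ℂ}
    (h : ∀ z : ℂ, 0 ≤ z.re → z - F z = g.eval z * Complex.exp (c * z)) :
    c = 0 := by
  have hnorm : ∀ z : ℂ, 0 ≤ z.re → ‖z - F z‖ = ‖g.eval z‖ * Real.exp (c * z).re := fun z hz => by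
    rw [h z hz, norm_mul, Complex.norm_exp]
  have hlow : ∀ z : ℂ, 0 ≤ z.re → ‖z‖ - K ≤ ‖g.eval z‖ * Real.exp (c * z).re := fun z hz => by
    linarith [hnorm z hz, norm_sub_norm_le z (F z), hF z hz]
  have hup : ∀ z : ℂ, 0 ≤ z.re → ‖g.eval z‖ * Real.exp (c * z).re ≤ ‖z‖ + K := fun z hz => by
    linarith [hnorm z hz, norm_sub_le z (F z), hF z hz]
  have hdir : ∀ u : ℂ, 0 ≤ u.re → ‖u‖ = 1 → 0 ≤ (c * u).re := by
    intro u hu hu1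
    suffices -(c * u).re ≤ 0 by linarith
    refine nonpos_of_mul_exp_le_norm_eval g (z := fun t : ℝ => t * u) (K := K) ?_ ?_
    · filter_upwards [eventually_ge_atTop 0] with t ht
      simp [hu1, abs_of_nonneg ht]
    · filter_upwards [eventually_ge_atTop 0] with t ht
      have := hlow (t * u) (by simpa using mul_nonneg ht hu)
      rw [norm_mul, hu1, Complex.norm_real, Real.norm_of_nonneg ht, mul_one,
        show (c * (t * u)).re = (c * u).re * t by simp; ring] at this
      rw [neg_mul, Real.exp_neg, ← div_eq_mul_inv, div_le_iff₀ (Real.exp_pos _)]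
      exact this
  have hg : g ≠ 0 := by
    rintro rfl
    have hK : 0 ≤ K := (norm_nonneg _).trans (hF 0 le_rfl)
    have := hlow ((K + 1 : ℝ) : ℂ) (by simp; linarith)
    rw [Complex.norm_real, Real.norm_of_nonneg (by linarith)] at this
    simp at this
    linarith
  have hre_le : c.re ≤ 0 := by
    refine nonpos_of_norm_eval_mul_exp_le hg (K := K) ?_
    filter_upwards [eventually_ge_atTop 0] with t ht
    simpa [abs_of_nonneg ht] using hup t (by simpa using ht)
  have hre_ge := hdir 1 (by simp) (by simp)
  have him_le := hdir Complex.I (by simp) (by simp)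
  have him_ge := hdir (-Complex.I) (by simp) (by simp)
  simp only [mul_one, Complex.mul_I_re, mul_neg, Complex.neg_re, neg_neg] at hre_ge him_le him_ge
  exact Complex.ext (le_antisymm hre_le hre_ge) (by simp; linarith)

section StoneWeierstrass

variable {X : Type*} [TopologicalSpace X] [CompactSpace X]

theorem ContinuousLinearMap.eq_zero_of_map_pow_eq_zero (Λ : C(X, ℂ) →L[ℂ] ℂ) {e : C(X, ℂ)}
    (he : Function.Injective e) (he_star : star e = e) (h : ∀ n : ℕ, Λ (e ^ n) = 0) : Λ = 0 := by
  set A := StarAlgebra.adjoin ℂ {e}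
  have hA : A.SeparatesPoints := fun x y hxy =>
    ⟨e, ⟨e, StarAlgebra.subset_adjoin ℂ {e} rfl, rfl⟩, he.ne hxy⟩
  have hA_ker : (A : Set C(X, ℂ)) ⊆ (Λ.ker : Set C(X, ℂ)) := by
    have hspan :
        Subalgebra.toSubmodule A.toSubalgebra = Submodule.span ℂ (Submonoid.powers e) := by
      rw [StarAlgebra.adjoin_toSubalgebra, Set.star_singleton, he_star, Set.union_self,
        Algebra.adjoin_eq_span, Submonoid.powers_eq_closure]
    intro f hf
    change f ∈ Subalgebra.toSubmodule A.toSubalgebra at hf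
    rw [hspan] at hf
    refine Submodule.span_le.mpr ?_ hf
    rintro _ ⟨n, rfl⟩
    exact h n
  have hdense := ContinuousMap.starSubalgebra_topologicalClosure_eq_top_of_separatesPoints A hA
  ext f
  have := closure_minimal hA_ker Λ.isClosed_ker
  rw [← StarSubalgebra.topologicalClosure_coe, hdense] at this
  exact this trivial

variable [MeasurableSpace X] [BorelSpace X] (μ : Measure X) [IsFiniteMeasure μ]

noncomputable def ContinuousMap.integralMulCLM (m : C(X, ℂ)) : C(X, ℂ) →L[ℂ] ℂ :=
  (L1.integralCLM' ℂ).comp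
    ((ContinuousMap.toLp 1 μ ℂ).comp (ContinuousLinearMap.mul ℂ C(X, ℂ) m))

theorem ContinuousMap.integralMulCLM_apply (m f : C(X, ℂ)) :
    integralMulCLM μ m f = ∫ x, m x * f x ∂μ := by
  rw [integralMulCLM, ContinuousLinearMap.comp_apply, ContinuousLinearMap.comp_apply,
    ← L1.integral_eq', L1.integral_eq_integral]
  exact integral_congr_ae (ContinuousMap.coeFn_toLp (p := 1) μ (m * f))

theorem integral_mul_eq_zero_of_integral_mul_pow_eq_zero (m : C(X, ℂ)) {e : C(X, ℂ)}
    (he : Function.Injective e) (he_star : star e = e)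
    (h : ∀ n : ℕ, ∫ x, m x * e x ^ n ∂μ = 0) (f : C(X, ℂ)) : ∫ x, m x * f x ∂μ = 0 := by
  have := (ContinuousMap.integralMulCLM μ m).eq_zero_of_map_pow_eq_zero he he_star fun n => by
    simpa [ContinuousMap.integralMulCLM_apply] using h n
  rw [← ContinuousMap.integralMulCLM_apply, this, zero_apply]

end StoneWeierstrass

section Laplace

variable {M : ℝ → ℂ} {τ : ℝ}

lemma norm_mul_exp_neg_mul_le {C : ℝ} (hC : ∀ θ ∈ Icc 0 τ, ‖M θ‖ ≤ C) {z : ℂ} (hz : 0 ≤ z.re)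
    {θ : ℝ} (hθ : θ ∈ Icc 0 τ) : ‖M θ * Complex.exp (-z * θ)‖ ≤ C := by
  rw [norm_mul, Complex.norm_exp]
  refine (mul_le_of_le_one_right (norm_nonneg _) (Real.exp_le_one_iff.mpr ?_)).trans (hC θ hθ)
  simpa using mul_nonneg hz hθ.1

lemma norm_integral_mul_exp_neg_le (hτ : 0 ≤ τ) {C : ℝ} (hC : ∀ θ ∈ Icc 0 τ, ‖M θ‖ ≤ C)
    {z : ℂ} (hz : 0 ≤ z.re) : ‖∫ θ in (0 : ℝ)..τ, M θ * Complex.exp (-z * θ)‖ ≤ C * τ := by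
  have := intervalIntegral.norm_integral_le_of_norm_le_const (a := 0) (b := τ) (C := C)
    (f := fun θ : ℝ => M θ * Complex.exp (-z * θ)) fun θ hθ => by
      rw [uIoc_of_le hτ] at hθ
      exact norm_mul_exp_neg_mul_le hC hz (Ioc_subset_Icc_self hθ)
  rwa [sub_zero, abs_of_nonneg hτ] at this

lemma tendsto_integral_mul_exp_neg_atTop (hτ : 0 ≤ τ) (hM : ContinuousOn M (Icc 0 τ)) :
    Tendsto (fun t : ℝ => ∫ θ in (0 : ℝ)..τ, M θ * Complex.exp (-t * θ)) atTop (𝓝 0) := by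
  obtain ⟨C, hC⟩ := isCompact_Icc.exists_bound_of_continuousOn hM
  rw [← intervalIntegral.integral_zero (E := ℂ) (a := 0) (b := τ) (μ := volume)]
  refine intervalIntegral.tendsto_integral_filter_of_dominated_convergence
    (l := (atTop : Filter ℝ)) (fun _ => C) ?_ ?_ (intervalIntegrable_const (μ := volume)) ?_
  · refine Eventually.of_forall fun t => ?_
    rw [uIoc_of_le hτ]
    exact ((hM.mono Ioc_subset_Icc_self).mul (by fun_prop)).aestronglyMeasurable measurableSet_Ioc
  · filter_upwards [eventually_ge_atTop 0] with t ht
    refine Eventually.of_forall fun θ hθ => ?_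
    rw [uIoc_of_le hτ] at hθ
    exact norm_mul_exp_neg_mul_le hC (by simpa using ht) (Ioc_subset_Icc_self hθ)
  · refine Eventually.of_forall fun θ hθ => ?_
    rw [uIoc_of_le hτ] at hθ
    rw [← mul_zero (M θ)]
    refine tendsto_const_nhds.mul ?_
    rw [tendsto_zero_iff_norm_tendsto_zero]
    simp_rw [Complex.norm_exp, show ∀ t : ℝ, (-(t : ℂ) * θ).re = -(θ * t) by simp [mul_comm]]
    exact Real.tendsto_exp_neg_atTop_nhds_zero.comp (tendsto_id.const_mul_atTop hθ.1)

theorem eqOn_zero_of_integral_mul_exp_neg_nat_eq_zero (hτ : 0 < τ) (hM : ContinuousOn M (Icc 0 τ))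
    (h : ∀ n : ℕ, ∫ θ in (0 : ℝ)..τ, M θ * Complex.exp (-n * θ) = 0) : EqOn M 0 (Icc 0 τ) := by
  let μ : Measure (Icc 0 τ) := (volume.restrict (Icc 0 τ)).comap Subtype.val
  have hμ (f : ℝ → ℂ) : ∫ x, f x ∂μ = ∫ θ in Icc 0 τ, f θ := by
    rw [integral_subtype_comap measurableSet_Icc, Measure.restrict_restrict_of_subset subset_rfl]
  let m : C(Icc 0 τ, ℂ) := ⟨(Icc 0 τ).domRestrict M, hM.domRestrict⟩
  let e : C(Icc 0 τ, ℂ) := ⟨fun θ => (Real.exp (-θ) : ℂ), by fun_prop⟩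
  have he : Function.Injective e := fun x y hxy =>
    Subtype.ext (neg_injective (Real.exp_injective (Complex.ofReal_injective hxy)))
  have he_star : star e = e := by
    ext x
    exact Complex.conj_ofReal _
  have hmom : ∀ n : ℕ, ∫ x, m x * e x ^ n ∂μ = 0 := fun n => by
    rw [← h n, intervalIntegral.integral_of_le hτ.le, ← integral_Icc_eq_integral_Ioc]
    refine (hμ fun θ => M θ * (Real.exp (-θ) : ℂ) ^ n).trans
      (setIntegral_congr_fun measurableSet_Icc fun θ _ => ?_)
    simp [Complex.ofReal_exp, ← Complex.exp_nat_mul]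
  have hnormSq : ∫ θ in Icc 0 τ, Complex.normSq (M θ) = 0 := by
    have := (hμ fun θ => M θ * star (M θ)).symm.trans
      (integral_mul_eq_zero_of_integral_mul_pow_eq_zero μ m he he_star hmom (star m))
    simp only [RCLike.star_def, Complex.mul_conj] at this
    exact_mod_cast this
  have hae : (fun θ => Complex.normSq (M θ)) =ᵐ[volume.restrict (Icc 0 τ)] 0 :=
    (integral_eq_zero_iff_of_nonneg (fun θ => Complex.normSq_nonneg _)
      ((Complex.continuous_normSq.comp_continuousOn hM).integrableOn_Icc)).mp hnormSq
  intro θ hθ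
  refine Complex.normSq_eq_zero.mp (Measure.eqOn_of_ae_eq hae
    (Complex.continuous_normSq.comp_continuousOn hM) continuousOn_const ?_ hθ)
  rw [interior_Icc, closure_Ioo hτ.ne]

end Laplace

theorem stmt_19 (a : ℂ) (τ : ℝ) (hτ : 0 < τ) (M : ℝ → ℂ)
    (hM : ContinuousOn M (Set.Icc 0 τ))
    (hMne : ¬ ∀ θ ∈ Set.Icc (0 : ℝ) τ, M θ = 0)
    (g : Polynomial ℂ) (c : ℂ)
    (h : ∀ lam : ℂ,
      lam - a - (∫ θ in (0 : ℝ)..τ, M θ * Complex.exp (-lam * θ))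
        = g.eval lam * Complex.exp (c * lam)) :
    False := by
  obtain ⟨B, hB⟩ := isCompact_Icc.exists_bound_of_continuousOn hM
  have hc : c = 0 := eq_zero_of_sub_eq_eval_mul_exp
    (F := fun z => a + ∫ θ in (0 : ℝ)..τ, M θ * Complex.exp (-z * θ)) (K := ‖a‖ + B * τ)
    (fun z hz => (norm_add_le _ _).trans
      (add_le_add_right (norm_integral_mul_exp_neg_le hτ.le hB hz) _))
    (fun z _ => by rw [← h z]; ring)
  subst hc
  simp only [zero_mul, Complex.exp_zero, mul_one] at h
  have hq : X - C a - g = 0 := by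
    refine eq_zero_of_tendsto_eval_ofReal
      ((tendsto_integral_mul_exp_neg_atTop hτ.le hM).congr fun t => ?_)
    simp only [eval_sub, eval_X, eval_C]
    linear_combination -h t
  refine hMne fun θ hθ => eqOn_zero_of_integral_mul_exp_neg_nat_eq_zero hτ hM (fun n => ?_) hθ
  have := congrArg (eval (n : ℂ)) hq
  simp only [eval_sub, eval_X, eval_C, eval_zero] at this
  linear_combination this - h n
end
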